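/- Fix a vertex $x \in \mathbb{Z}^2$ and let $(t_y)_{y \in \mathbb{Z}^2}$ be i.i.d. atomless random variables. Let $A_r$ be the event that there exists a self-avoiding path of length greater than $r$ starting at $x$ along which the values $t_y$ are strictly increasing. Then $P(A_r) \leq 4 \cdot 3^r / \lfloor r/2 \rfloor!$, and in particular $P(A_r) \to 0$ as $r \to \infty$. -/

import Mathlib

/-!
Increments of a self-avoiding path in `ℤ²` are unit steps that never reverse the previous step,
and together with the starting point they determine the path; so there are at most `4 · 3 ^ r`
self-avoiding paths with `r + 1` steps from `x`. Along a fixed such path the `r + 2` i.i.d. values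
are increasing with probability at most `1 / (r + 2)!`, because the `(r + 2)!` orderings of the
values are disjoint events of equal probability. Any longer increasing path starts with an
increasing path of `r + 1` steps, and a union bound finishes the estimate; the bound tends to `0`
since `3 ^ r ≤ 3 · 9 ^ ⌊r/2⌋`.
-/

open MeasureTheory ProbabilityTheory Filter
open scoped ENNReal
open Finset Function
open scoped Nat

section NonBacktracking

variable {α : Type*} [DecidableEq α]

def nonBacktracking (D : Finset α) (f : α → α) (n : ℕ) : Finset (Fin (n + 1) → α) :=
  {s ∈ Fintype.piFinset fun _ => D | ∀ i : Fin n, s i.succ ≠ f (s i.castSucc)}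

theorem card_nonBacktracking_le (D : Finset α) (f : α → α) (hf : ∀ a ∈ D, f a ∈ D) :
    ∀ n, #(nonBacktracking D f n) ≤ #D * (#D - 1) ^ n
  | 0 => (card_le_card (filter_subset _ _)).trans (by simp)
  | n + 1 => by
    have hfiber : ∀ g ∈ nonBacktracking D f n,
        #{s ∈ nonBacktracking D f (n + 1) | Fin.init s = g} ≤ #D - 1 := by
      intro g hg
      simp only [nonBacktracking, mem_filter, Fintype.mem_piFinset] at hg
      rw [← card_erase_of_mem (hf _ (hg.1 (Fin.last n)))]
      refine card_le_card_of_injOn (fun s => s (Fin.last (n + 1))) ?_ ?_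
      · intro s hs
        simp only [nonBacktracking, coe_filter, mem_filter, Fintype.mem_piFinset,
          Set.mem_ofPred_eq] at hs
        obtain ⟨⟨hD, hnb⟩, rfl⟩ := hs
        exact mem_erase.2 ⟨by simpa [Fin.init] using hnb (Fin.last n), hD _⟩
      · intro s hs s' hs' h
        simp only [coe_filter, Set.mem_ofPred_eq] at hs hs'
        rw [← Fin.snoc_init_self s, ← Fin.snoc_init_self s', hs.2, hs'.2]
        exact congrArg _ h
    calc #(nonBacktracking D f (n + 1))
        ≤ (#D - 1) * #(nonBacktracking D f n) :=
          card_le_mul_card_image_of_maps_to (fun s hs => ?_) _ hfiber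
      _ ≤ (#D - 1) * (#D * (#D - 1) ^ n) := by gcongr; exact card_nonBacktracking_le D f hf n
      _ = #D * (#D - 1) ^ (n + 1) := by ring
    simp only [nonBacktracking, mem_filter, Fintype.mem_piFinset] at hs ⊢
    exact ⟨fun i => hs.1 _, fun i => hs.2 i.castSucc⟩

end NonBacktracking

def unitSteps : Finset (ℤ × ℤ) := {(1, 0), (-1, 0), (0, 1), (0, -1)}

theorem mem_unitSteps {p : ℤ × ℤ} (h : |p.1| + |p.2| = 1) : p ∈ unitSteps := by
  obtain ⟨a, b⟩ := p
  dsimp only at h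
  simp only [unitSteps, mem_insert, mem_singleton, Prod.mk.injEq]
  rcases abs_cases a with ⟨h1, _⟩ | ⟨h1, _⟩ <;> rcases abs_cases b with ⟨h2, _⟩ | ⟨h2, _⟩ <;> omega

theorem neg_mem_unitSteps : ∀ p ∈ unitSteps, -p ∈ unitSteps := by decide

theorem card_nonBacktracking_unitSteps_le (n : ℕ) :
    #(nonBacktracking unitSteps Neg.neg n) ≤ 4 * 3 ^ n :=
  card_nonBacktracking_le _ _ neg_mem_unitSteps n

def increments {G : Type*} [Sub G] {n : ℕ} (X : Fin (n + 1) → G) : Fin n → G :=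
  fun i => X i.succ - X i.castSucc
theorem eq_of_increments_eq {G : Type*} [AddGroup G] {n : ℕ} {X Y : Fin (n + 1) → G}
    (h0 : X 0 = Y 0) (h : increments X = increments Y) : X = Y := by
  funext i
  induction i using Fin.induction with
  | zero => exact h0
  | succ i ih => simpa [increments, ih] using congrFun h i

def selfAvoidingPaths (x : ℤ × ℤ) (n : ℕ) : Set (Fin (n + 1) → ℤ × ℤ) :=
  {X | X 0 = x ∧ Injective X ∧
    ∀ i : Fin n, |(X i.succ).1 - (X i.castSucc).1| + |(X i.succ).2 - (X i.castSucc).2| = 1}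

section SelfAvoidingPaths

variable {x : ℤ × ℤ} {n : ℕ}

theorem comp_castLE_mem_selfAvoidingPaths {m : ℕ} (hmn : m ≤ n) {X : Fin (n + 1) → ℤ × ℤ}
    (hX : X ∈ selfAvoidingPaths x n) :
    X ∘ Fin.castLE (Nat.succ_le_succ hmn) ∈ selfAvoidingPaths x m := by
  obtain ⟨hX0, hXinj, hXstep⟩ := hX
  refine ⟨hX0, hXinj.comp (Fin.castLE_injective _), fun i => ?_⟩
  simpa using hXstep (Fin.castLE hmn i)

theorem increments_mem_nonBacktracking {X : Fin (n + 2) → ℤ × ℤ}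
    (hX : X ∈ selfAvoidingPaths x (n + 1)) :
    increments X ∈ nonBacktracking unitSteps Neg.neg n := by
  obtain ⟨-, hXinj, hXstep⟩ := hX
  simp only [nonBacktracking, mem_filter, Fintype.mem_piFinset]
  refine ⟨fun i => mem_unitSteps (hXstep i), fun i hback => ?_⟩
  -- a backtracking step would revisit the vertex two steps back
  simp only [increments, neg_sub, ← Fin.succ_castSucc, sub_left_inj] at hback
  have := congrArg Fin.val (hXinj hback)
  simp only [Fin.val_succ, Fin.val_castSucc] at this
  omega

theorem injOn_increments_selfAvoidingPaths :
    Set.InjOn increments (selfAvoidingPaths x n) :=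
  fun _ hX _ hY h => eq_of_increments_eq (hX.1.trans hY.1.symm) h

theorem finite_selfAvoidingPaths : (selfAvoidingPaths x (n + 1)).Finite :=
  Set.Finite.of_injOn (fun _ => increments_mem_nonBacktracking)
    injOn_increments_selfAvoidingPaths (nonBacktracking unitSteps Neg.neg n).finite_toSet

theorem ncard_selfAvoidingPaths_le : (selfAvoidingPaths x (n + 1)).ncard ≤ 4 * 3 ^ n :=
  calc (selfAvoidingPaths x (n + 1)).ncard
      ≤ (nonBacktracking unitSteps Neg.neg n : Set (Fin (n + 1) → ℤ × ℤ)).ncard :=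
        Set.ncard_le_ncard_of_injOn _ (fun _ => increments_mem_nonBacktracking)
          injOn_increments_selfAvoidingPaths (finite_toSet _)
    _ ≤ 4 * 3 ^ n := by
        rw [Set.ncard_coe_finset]; exact card_nonBacktracking_unitSteps_le n

end SelfAvoidingPaths

section StrictMonoProbability

theorem measurableSet_setOf_strictMono (m : ℕ) :
    MeasurableSet {v : Fin m → ℝ | StrictMono v} := by
  have : {v : Fin m → ℝ | StrictMono v} = ⋂ i, ⋂ j, ⋂ (_ : i < j), {v | v i < v j} := by
    ext v; simp [StrictMono]
  rw [this]
  exact .iInter fun i => .iInter fun j => .iInter fun _ =>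
    measurableSet_lt (measurable_pi_apply i) (measurable_pi_apply j)

theorem pairwise_disjoint_setOf_strictMono_comp_perm {α : Type*} [LinearOrder α] (m : ℕ) :
    Pairwise (Disjoint on fun σ : Equiv.Perm (Fin m) =>
      (· ∘ σ) ⁻¹' {v : Fin m → α | StrictMono v}) := by
  intro σ τ hστ
  refine Set.disjoint_left.2 fun v (hσ : StrictMono (v ∘ σ)) (hτ : StrictMono (v ∘ τ)) => hστ ?_
  have hrange : Set.range (v ∘ σ) = Set.range (v ∘ τ) := by
    rw [Set.range_comp, Set.range_comp, σ.range_eq_univ, τ.range_eq_univ]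
  have hv : Injective v := by
    simpa using hσ.injective.comp σ.symm.injective
  exact Equiv.ext fun i => hv (congrFun ((hσ.range_inj hτ).1 hrange) i)

theorem pi_preimage_comp_perm {ι α : Type*} [Fintype ι] [MeasurableSpace α] (μ : Measure α)
    [SigmaFinite μ] (σ : Equiv.Perm ι) {s : Set (ι → α)} (hs : MeasurableSet s) :
    Measure.pi (fun _ => μ) ((· ∘ σ) ⁻¹' s) = Measure.pi (fun _ => μ) s := by
  have h := (measurePreserving_piCongrLeft (fun _ => μ) σ.symm).measure_preimage
    hs.nullMeasurableSet
  convert h using 2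
  ext v
  simp only [Set.mem_preimage, MeasurableEquiv.coe_piCongrLeft]
  congr!
  funext i
  simp [Equiv.piCongrLeft_apply_eq_cast]

theorem pi_setOf_strictMono_le (μ : Measure ℝ) [IsProbabilityMeasure μ] (m : ℕ) :
    Measure.pi (fun _ : Fin m => μ) {v | StrictMono v} ≤ (m ! : ℝ≥0∞)⁻¹ := by
  set ν := Measure.pi fun _ : Fin m => μ
  have hmeas := measurableSet_setOf_strictMono m
  -- the `m!` reorderings of the coordinates give disjoint events of equal probability
  have h : m ! * ν {v | StrictMono v} ≤ 1 :=
    calc m ! * ν {v | StrictMono v}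
        = ∑ σ : Equiv.Perm (Fin m), ν ((· ∘ σ) ⁻¹' {v | StrictMono v}) := by
          simp only [ν, pi_preimage_comp_perm μ _ hmeas, sum_const, card_univ, Fintype.card_perm,
            Fintype.card_fin, nsmul_eq_mul]
      _ = ν (⋃ σ : Equiv.Perm (Fin m), (· ∘ σ) ⁻¹' {v | StrictMono v}) := by
          rw [measure_iUnion (pairwise_disjoint_setOf_strictMono_comp_perm m)
            fun σ => hmeas.preimage (by fun_prop), tsum_fintype]
      _ ≤ 1 := prob_le_one
  rwa [ENNReal.le_inv_iff_mul_le, mul_comm]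

theorem ProbabilityTheory.iIndepFun.map_comp_eq_pi {Ω ι β : Type*} [MeasurableSpace Ω]
    [MeasurableSpace β] {P : Measure Ω} [IsProbabilityMeasure P] {t : ι → Ω → β}
    (hmeas : ∀ y, Measurable (t y))
    (hindep : iIndepFun t P) {μ : Measure β} (hid : ∀ y, P.map (t y) = μ) {m : ℕ}
    {y : Fin m → ι} (hy : Injective y) :
    P.map (fun ω i => t (y i) ω) = Measure.pi fun _ => μ := by
  simpa [hid] using (hindep.precomp hy).map_fun_eq_pi_map fun i => (hmeas _).aemeasurable

theorem ProbabilityTheory.iIndepFun.measure_strictMono_comp_le {Ω ι : Type*} [MeasurableSpace Ω]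
    {P : Measure Ω} [IsProbabilityMeasure P] {t : ι → Ω → ℝ} (hmeas : ∀ y, Measurable (t y))
    (hindep : iIndepFun t P) {μ : Measure ℝ} [IsProbabilityMeasure μ]
    (hid : ∀ y, P.map (t y) = μ) {m : ℕ} {y : Fin m → ι} (hy : Injective y) :
    P {ω | StrictMono fun i => t (y i) ω} ≤ (m ! : ℝ≥0∞)⁻¹ := by
  calc P {ω | StrictMono fun i => t (y i) ω}
      = P.map (fun ω i => t (y i) ω) {v | StrictMono v} :=
        (Measure.map_apply (measurable_pi_lambda _ fun i => hmeas _)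
          (measurableSet_setOf_strictMono m)).symm
    _ ≤ (m ! : ℝ≥0∞)⁻¹ := by
        rw [hindep.map_comp_eq_pi hmeas hid hy]; exact pi_setOf_strictMono_le μ m

end StrictMonoProbability

theorem measure_biUnion_selfAvoidingPaths_strictMono_le {Ω : Type*} [MeasurableSpace Ω]
    {P : Measure Ω} [IsProbabilityMeasure P] {t : ℤ × ℤ → Ω → ℝ}
    (hmeas : ∀ y, Measurable (t y)) (hindep : iIndepFun t P) {μ : Measure ℝ}
    [IsProbabilityMeasure μ] (hid : ∀ y, P.map (t y) = μ) (x : ℤ × ℤ) (n : ℕ) :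
    P (⋃ X ∈ selfAvoidingPaths x (n + 1), {ω | StrictMono fun i => t (X i) ω}) ≤
      4 * 3 ^ n * ((n + 2)! : ℝ≥0∞)⁻¹ := by
  have hW := finite_selfAvoidingPaths (x := x) (n := n)
  calc P (⋃ X ∈ selfAvoidingPaths x (n + 1), {ω | StrictMono fun i => t (X i) ω})
      = P (⋃ X ∈ hW.toFinset, {ω | StrictMono fun i => t (X i) ω}) := by simp
    _ ≤ ∑ X ∈ hW.toFinset, P {ω | StrictMono fun i => t (X i) ω} :=
        measure_biUnion_finset_le _ _
    _ ≤ ∑ _X ∈ hW.toFinset, ((n + 2)! : ℝ≥0∞)⁻¹ := sum_le_sum fun X hX =>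
        hindep.measure_strictMono_comp_le hmeas hid (hW.mem_toFinset.1 hX).2.1
    _ = (selfAvoidingPaths x (n + 1)).ncard * ((n + 2)! : ℝ≥0∞)⁻¹ := by
        rw [sum_const, nsmul_eq_mul, Set.ncard_eq_toFinset_card _ hW]
    _ ≤ 4 * 3 ^ n * ((n + 2)! : ℝ≥0∞)⁻¹ := by
        gcongr; exact_mod_cast ncard_selfAvoidingPaths_le

theorem tendsto_four_mul_three_pow_div_factorial_half :
    Tendsto (fun r : ℕ => (4 * 3 ^ r : ℝ≥0∞) / (r / 2)!) atTop (nhds 0) := by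
  have h9 : Tendsto (fun k : ℕ => (9 : ℝ≥0∞) ^ k / k !) atTop (nhds 0) := by
    have := ENNReal.tendsto_ofReal (FloorSemiring.tendsto_pow_div_factorial_atTop (9 : ℝ))
    rw [ENNReal.ofReal_zero] at this
    refine this.congr fun k => ?_
    rw [ENNReal.ofReal_div_of_pos (by positivity), ENNReal.ofReal_pow (by norm_num),
      ENNReal.ofReal_natCast]
    norm_num
  have hhalf : Tendsto (fun r : ℕ => r / 2) atTop atTop :=
    tendsto_atTop_atTop.2 fun b => ⟨2 * b, fun a ha => by omega⟩
  have h12 := ENNReal.Tendsto.const_mul (h9.comp hhalf) (Or.inr (by norm_num : (12 : ℝ≥0∞) ≠ ⊤))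
  rw [mul_zero] at h12
  refine tendsto_of_tendsto_of_tendsto_of_le_of_le tendsto_const_nhds h12 (fun _ => zero_le)
    fun r => ?_
  have h3 : (3 : ℝ≥0∞) ^ r ≤ 3 * 9 ^ (r / 2) := by
    calc (3 : ℝ≥0∞) ^ r ≤ 3 ^ (2 * (r / 2) + 1) := pow_le_pow_right₀ (by norm_num) (by omega)
      _ = 3 * 9 ^ (r / 2) := by rw [pow_succ, pow_mul]; norm_num; ring
  calc (4 * 3 ^ r : ℝ≥0∞) / (r / 2)! ≤ 4 * (3 * 9 ^ (r / 2)) / (r / 2)! := by gcongr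
    _ = 12 * (9 ^ (r / 2) / (r / 2)!) := by rw [← mul_assoc, mul_div_assoc]; norm_num

theorem stmt_3_general {Ω : Type*} [MeasurableSpace Ω] (P : Measure Ω) [IsProbabilityMeasure P]
    (x : ℤ × ℤ)
    (t : ℤ × ℤ → Ω → ℝ) (hmeas : ∀ y, Measurable (t y))
    (hindep : iIndepFun t P)
    (μ : Measure ℝ) (hid : ∀ y, Measure.map (t y) P = μ)
    (A : ℕ → Set Ω)
    (hA : ∀ r, A r = {ω | ∃ n : ℕ, r < n ∧ ∃ X : Fin (n + 1) → ℤ × ℤ,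
      X 0 = x ∧ Function.Injective X ∧
      (∀ i : Fin n, |(X i.succ).1 - (X i.castSucc).1| +
        |(X i.succ).2 - (X i.castSucc).2| = 1) ∧
      StrictMono fun i : Fin (n + 1) => t (X i) ω}) :
    (∀ r : ℕ, P (A r) ≤ (4 * 3 ^ r : ℝ≥0∞) / (Nat.factorial (r / 2))) ∧
      Tendsto (fun r => P (A r)) atTop (nhds 0) := by
  have : IsProbabilityMeasure μ := hid x ▸ Measure.isProbabilityMeasure_map (hmeas x).aemeasurable
  have hbound (r : ℕ) : P (A r) ≤ (4 * 3 ^ r : ℝ≥0∞) / (r / 2)! :=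
    calc P (A r)
        ≤ P (⋃ X ∈ selfAvoidingPaths x (r + 1), {ω | StrictMono fun i => t (X i) ω}) := by
          refine measure_mono ?_
          rw [hA r]
          rintro ω ⟨n, hrn, X, hX0, hXinj, hXstep, hXmono⟩
          exact Set.mem_biUnion (comp_castLE_mem_selfAvoidingPaths hrn ⟨hX0, hXinj, hXstep⟩)
            (hXmono.comp (Fin.strictMono_castLE _))
      _ ≤ 4 * 3 ^ r * ((r + 2)! : ℝ≥0∞)⁻¹ :=
          measure_biUnion_selfAvoidingPaths_strictMono_le hmeas hindep hid x r
      _ ≤ 4 * 3 ^ r / (r / 2)! := by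
          rw [div_eq_mul_inv]; gcongr; omega
  exact ⟨hbound, tendsto_of_tendsto_of_tendsto_of_le_of_le tendsto_const_nhds
    tendsto_four_mul_three_pow_div_factorial_half (fun _ => zero_le) hbound⟩

/-- The probability that some self-avoiding path of length greater than `r` starting at
`x` has strictly increasing i.i.d. atomless arrival times along it is at most
`4 · 3^r / ⌊r/2⌋!`, and in particular tends to `0` as `r → ∞`. -/
theorem stmt_3 {Ω : Type*} [MeasurableSpace Ω] (P : Measure Ω) [IsProbabilityMeasure P]
    (x : ℤ × ℤ)
    (t : ℤ × ℤ → Ω → ℝ) (hmeas : ∀ y, Measurable (t y))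
    (hindep : iIndepFun t P)
    (μ : Measure ℝ) (hid : ∀ y, Measure.map (t y) P = μ)
    (hatomless : ∀ a : ℝ, μ {a} = 0)
    (A : ℕ → Set Ω)
    (hA : ∀ r, A r = {ω | ∃ n : ℕ, r < n ∧ ∃ X : Fin (n + 1) → ℤ × ℤ,
      X 0 = x ∧ Function.Injective X ∧
      (∀ i : Fin n, |(X i.succ).1 - (X i.castSucc).1| +
        |(X i.succ).2 - (X i.castSucc).2| = 1) ∧
      StrictMono fun i : Fin (n + 1) => t (X i) ω}) :
    (∀ r : ℕ, P (A r) ≤ (4 * 3 ^ r : ℝ≥0∞) / (Nat.factorial (r / 2))) ∧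
      Tendsto (fun r => P (A r)) atTop (nhds 0) :=
  stmt_3_general P x t hmeas hindep μ hid A hA
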